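/- Let δ ≤ y0 < 1 with y0 ≥ δ^(β1/α2) and y0^(α2/β1) ≥ δ^(α1/β2) (so the g-orbit of (1, y0; E) follows the eating–resting branches). If g(g(1, y0; E)) = (1, y0; E), then α2·β2 = α1·β1. In other words, a period-two orbit of type E → R → E exists only when (α2/α1)·(β2/β1) = 1. -/
import Mathlib


/-- The discrete state of a cow: eating, resting (lying down), or standing. -/
inductive CowState
  | E | R | S
deriving DecidableEq

open CowState

/-- The Poincaré map `g` of the single-cow model, acting on points
`(x, y; θ)` of the boundary of the square `[δ,1]²` together with a state label.
Powers are real powers (`Real.rpow`). -/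
noncomputable def g (α1 α2 β1 β2 δ : ℝ) : ℝ × ℝ × CowState → ℝ × ℝ × CowState
  | (_x, y, .E) =>
      if δ ^ (β1 / α2) ≤ y then (y ^ (α2 / β1), 1, R)
      else (δ, δ ^ (-(β1 / α2)) * y, S)
  | (x, _y, .R) =>
      if δ ^ (α1 / β2) ≤ x then (1, x ^ (β2 / α1), E)
      else (δ ^ (-(α1 / β2)) * x, δ, S)
  | (x, y, .S) =>
      if x = δ then
        -- on the edge `x = δ`
        (if y ≤ δ ^ (β1 / α1) then (1, δ ^ (-(β1 / α1)) * y, E)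
         else (y ^ (-(α1 / β1)) * δ, 1, R))
      else
        -- on the edge `y = δ`
        (if δ ^ (α1 / β1) ≤ x then (1, x ^ (-(β1 / α1)) * δ, E)
         else (δ ^ (-(α1 / β1)) * x, 1, R))

/-- The Poincaré section `Σ = {(1,y;E) : δ ≤ y ≤ 1} ∪ {(x,1;R) : δ ≤ x < 1}`. -/
def inSigma (δ : ℝ) : ℝ × ℝ × CowState → Prop
  | (x, y, .E) => x = 1 ∧ δ ≤ y ∧ y ≤ 1
  | (x, y, .R) => δ ≤ x ∧ x < 1 ∧ y = 1
  | (_, _, .S) => False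

/-- The first-return map `f` on the Poincaré section `Σ`:
`f(w) = g(w)` if `g(w) ∈ Σ`, and `f(w) = g(g(w))` otherwise. -/
noncomputable def f (α1 α2 β1 β2 δ : ℝ) (w : ℝ × ℝ × CowState) : ℝ × ℝ × CowState := by
  classical
  exact if inSigma δ (g α1 α2 β1 β2 δ w) then g α1 α2 β1 β2 δ w
        else g α1 α2 β1 β2 δ (g α1 α2 β1 β2 δ w)

/-- if `δ ≤ y0 < 1` with `y0 ≥ δ^(β1/α2)` and
`y0^(α2/β1) ≥ δ^(α1/β2)` (so the `g`-orbit of `(1,y0;E)` follows the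
eating–resting branches), and `g(g(1,y0;E)) = (1,y0;E)`, then
`α2·β2 = α1·β1`; i.e. a period-two orbit of type E → R → E exists only when
`(α2/α1)·(β2/β1) = 1`. -/
theorem period_two_ERE_requires_parameter_identity
    (α1 α2 β1 β2 δ : ℝ)
    (hα1 : 0 < α1) (hα2 : 0 < α2) (hβ1 : 0 < β1) (hβ2 : 0 < β2)
    (hδ0 : 0 < δ) (hδ1 : δ < 1)
    (y0 : ℝ) (hy0l : δ ≤ y0) (hy0u : y0 < 1)
    (hb1 : δ ^ (β1 / α2) ≤ y0)
    (hb2 : δ ^ (α1 / β2) ≤ y0 ^ (α2 / β1))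
    (hfix : g α1 α2 β1 β2 δ (g α1 α2 β1 β2 δ (1, y0, E)) = (1, y0, E)) :
    α2 * β2 = α1 * β1 := by
  have hy0pos : 0 < y0 := lt_of_lt_of_le hδ0 hy0l
  have h1 : g α1 α2 β1 β2 δ (1, y0, E) = (y0 ^ (α2 / β1), 1, R) := by
    simp [g, hb1]
  rw [h1] at hfix
  have h2 : g α1 α2 β1 β2 δ (y0 ^ (α2 / β1), 1, R)
      = (1, (y0 ^ (α2 / β1)) ^ (β2 / α1), E) := by
    simp [g, hb2]
  rw [h2] at hfix
  have hy : y0 ^ (α2 / β1 * (β2 / α1)) = y0 := by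
    rw [Real.rpow_mul hy0pos.le]
    simpa using congrArg (fun p => p.2.1) hfix
  have hlog : α2 / β1 * (β2 / α1) * Real.log y0 = Real.log y0 := by
    rw [← Real.log_rpow hy0pos, hy]
  have hlne : Real.log y0 ≠ 0 := ne_of_lt (Real.log_neg hy0pos hy0u)
  have he : α2 / β1 * (β2 / α1) = 1 :=
    mul_right_cancel₀ hlne (by linarith)
  field_simp at he
  linarith [he]
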